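/- For every k ∈ ℕ, TPTL_{k+1} is strictly more expressive than TPTL_k: the formula φ[k+1], defined by φ[1] = p ∧ X p and φ[m+1] = p ∧ X φ[m], is expressible with until rank k+1 but is not equivalent to any TPTL formula of until rank at most k. -/

import Mathlib

/-- Integers extended with `-∞` (`⊥`) and `+∞` (`⊤`), used as interval endpoints. -/
abbrev XEInt := WithBot (WithTop ℤ)

def XEInt.ofInt (n : ℤ) : XEInt := ((n : WithTop ℤ) : XEInt)

/-- An interval of integers, given by two (possibly infinite) endpoints and
openness flags. -/
structure Iv where
  lo : XEInt
  hi : XEInt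
  loOpen : Bool
  hiOpen : Bool

/-- Membership of an integer in an interval. -/
def Iv.mem (I : Iv) (d : ℤ) : Prop :=
  (if I.loOpen then I.lo < XEInt.ofInt d else I.lo ≤ XEInt.ofInt d) ∧
  (if I.hiOpen then XEInt.ofInt d < I.hi else XEInt.ofInt d ≤ I.hi)

/-- The interval `(-∞, +∞)`. -/
def Iv.univ : Iv := ⟨⊥, ⊤, true, true⟩

/-- The singleton interval `[n, n]`. -/
def Iv.pt (n : ℤ) : Iv := ⟨XEInt.ofInt n, XEInt.ofInt n, false, false⟩

/-- A data word: an infinite sequence of pairs of a set of propositions and a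
natural number data value. -/
abbrev DataWord (P : Type) := ℕ → (Set P) × ℕ

/-- Syntax of MTL: atoms, negation, conjunction, and interval-constrained
strict until. -/
inductive MTL (P : Type) where
  | atom : P → MTL P
  | neg  : MTL P → MTL P
  | and  : MTL P → MTL P → MTL P
  | untl : MTL P → Iv → MTL P → MTL P

/-- Satisfaction of an MTL formula at position `i` of data word `w`. -/
def MTL.sat {P : Type} (w : DataWord P) : ℕ → MTL P → Prop
  | i, .atom p => p ∈ (w i).1
  | i, .neg φ => ¬ MTL.sat w i φ
  | i, .and φ ψ => MTL.sat w i φ ∧ MTL.sat w i ψ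
  | i, .untl φ I ψ => ∃ j, i < j ∧ MTL.sat w j ψ ∧
      I.mem (((w j).2 : ℤ) - ((w i).2 : ℤ)) ∧
      ∀ k, i < k → k < j → MTL.sat w k φ

/-- A data word satisfies an MTL formula if it holds at position `0`. -/
def MTL.models {P : Type} (w : DataWord P) (φ : MTL P) : Prop := MTL.sat w 0 φ

/-- The until rank of an MTL formula. -/
def MTL.urk {P : Type} : MTL P → ℕ
  | .atom _ => 0
  | .neg φ => φ.urk
  | .and φ ψ => max φ.urk ψ.urk
  | .untl φ _ ψ => max φ.urk ψ.urk + 1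

/-- All interval endpoints of until operators in the formula lie in `S`. -/
def MTL.endpointsIn {P : Type} : MTL P → Set XEInt → Prop
  | .atom _, _ => True
  | .neg φ, S => φ.endpointsIn S
  | .and φ ψ, S => φ.endpointsIn S ∧ ψ.endpointsIn S
  | .untl φ I ψ, S => I.lo ∈ S ∧ I.hi ∈ S ∧ φ.endpointsIn S ∧ ψ.endpointsIn S

/-- Syntax of TPTL: atoms, register constraints, negation, conjunction,
strict until, and the freeze quantifier. -/
inductive TPTL (P V : Type) where
  | atom : P → TPTL P V
  | cstr : V → Iv → TPTL P V
  | neg : TPTL P V → TPTL P V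
  | and : TPTL P V → TPTL P V → TPTL P V
  | untl : TPTL P V → TPTL P V → TPTL P V
  | freeze : V → TPTL P V → TPTL P V

/-- Satisfaction of a TPTL formula at position `i` of data word `w` under the
register valuation `ν`. -/
def TPTL.sat {P V : Type} [DecidableEq V] (w : DataWord P) :
    ℕ → (V → ℕ) → TPTL P V → Prop
  | i, _, .atom p => p ∈ (w i).1
  | i, ν, .cstr x I => I.mem (((w i).2 : ℤ) - (ν x : ℤ))
  | i, ν, .neg φ => ¬ TPTL.sat w i ν φ
  | i, ν, .and φ ψ => TPTL.sat w i ν φ ∧ TPTL.sat w i ν ψ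
  | i, ν, .untl φ ψ => ∃ j, i < j ∧ TPTL.sat w j ν ψ ∧
      ∀ k, i < k → k < j → TPTL.sat w k ν φ
  | i, ν, .freeze x φ => TPTL.sat w i (Function.update ν x (w i).2) φ

/-- A data word satisfies a TPTL formula if it holds at position `0` under the
valuation mapping every register to the first data value. -/
def TPTL.models {P V : Type} [DecidableEq V] (w : DataWord P) (φ : TPTL P V) : Prop :=
  TPTL.sat w 0 (fun _ => (w 0).2) φ

/-- The until rank of a TPTL formula. -/
def TPTL.urk {P V : Type} : TPTL P V → ℕ
  | .atom _ => 0
  | .cstr _ _ => 0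
  | .neg φ => φ.urk
  | .and φ ψ => max φ.urk ψ.urk
  | .untl φ ψ => max φ.urk ψ.urk + 1
  | .freeze _ φ => φ.urk

/-- All register constraints in the formula are equality tests `x ∈ [0,0]`. -/
def TPTL.eqOnly {P V : Type} : TPTL P V → Prop
  | .atom _ => True
  | .cstr _ I => I = Iv.pt 0
  | .neg φ => φ.eqOnly
  | .and φ ψ => φ.eqOnly ∧ ψ.eqOnly
  | .untl φ ψ => φ.eqOnly ∧ ψ.eqOnly
  | .freeze _ φ => φ.eqOnly

/-- All endpoints of intervals in register constraints lie in `S`. -/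
def TPTL.cstrIn {P V : Type} : TPTL P V → Set XEInt → Prop
  | .atom _, _ => True
  | .cstr _ I, S => I.lo ∈ S ∧ I.hi ∈ S
  | .neg φ, S => φ.cstrIn S
  | .and φ ψ, S => φ.cstrIn S ∧ ψ.cstrIn S
  | .untl φ ψ, S => φ.cstrIn S ∧ ψ.cstrIn S
  | .freeze _ φ, S => φ.cstrIn S

/-- A TPTL falsity constant over `Bool`. -/
def tff : TPTL Bool ℕ := .and (.atom true) (.neg (.atom true))

/-- The next operator `X φ := false U φ`. -/
def tX (φ : TPTL Bool ℕ) : TPTL Bool ℕ := .untl tff φ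

/-- `tphiU k` is the TPTL rendering of `φ[k+1]`: `φ[1] = p ∧ X p`,
`φ[m+1] = p ∧ X φ[m]`, with `p` the atom `true`. -/
def tphiU : ℕ → TPTL Bool ℕ
  | 0 => .and (.atom true) (tX (.atom true))
  | m + 1 => .and (.atom true) (tX (tphiU m))

/-!
Take the words `blockWord m`, in which `p` holds exactly at the first `m` positions and all data
values are `0`, so that constraints and freezing are inert on them. A formula of until rank `r`
cannot tell position `i` of `blockWord m` from position `i'` of `blockWord n` as soon as the
distances `m - i` and `n - i'` to the end of the block agree after truncation at `r + 1`: this is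
an Ehrenfeucht–Fraïssé argument in which every until step consumes one unit of look-ahead.
But `φ[k+1]` holds at `0` in `blockWord (k + 2)` and fails in `blockWord (k + 1)`, whose
distances `k + 2` and `k + 1` agree after truncation at `k + 1`.
-/

theorem TPTL.sat_tX {w : DataWord Bool} {i : ℕ} {ν : ℕ → ℕ} {φ : TPTL Bool ℕ} :
    TPTL.sat w i ν (tX φ) ↔ TPTL.sat w (i + 1) ν φ := by
  refine ⟨fun ⟨j, hij, hj, hbetween⟩ => ?_, fun h => ⟨i + 1, i.lt_succ_self, h, by omega⟩⟩
  obtain rfl : j = i + 1 := by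
    by_contra hne
    have hfalse := hbetween (i + 1) (by omega) (by omega)
    exact hfalse.2 hfalse.1
  exact hj

theorem TPTL.sat_untl_of_forall_exists {P V : Type} [DecidableEq V] {w w' : DataWord P}
    {i i' : ℕ} {ν : V → ℕ} {φ ψ : TPTL P V} {R : ℕ → ℕ → Prop}
    (hφ : ∀ k k', R k k' → TPTL.sat w k ν φ → TPTL.sat w' k' ν φ)
    (hψ : ∀ j j', R j j' → TPTL.sat w j ν ψ → TPTL.sat w' j' ν ψ)
    (hresponse : ∀ j, i < j → ∃ j', i' < j' ∧ R j j' ∧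
      ∀ k', i' < k' → k' < j' → ∃ k, i < k ∧ k < j ∧ R k k') :
    TPTL.sat w i ν (.untl φ ψ) → TPTL.sat w' i' ν (.untl φ ψ) := by
  rintro ⟨j, hij, hj, hbetween⟩
  obtain ⟨j', hij', hR, hback⟩ := hresponse j hij
  refine ⟨j', hij', hψ j j' hR hj, fun k' hk' hk'j' => ?_⟩
  obtain ⟨k, hik, hkj, hRk⟩ := hback k' hk' hk'j'
  exact hφ k k' hRk (hbetween k hik hkj)

theorem sat_tphiU_iff {w : DataWord Bool} {ν : ℕ → ℕ} (k : ℕ) :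
    ∀ i, TPTL.sat w i ν (tphiU k) ↔ ∀ l < k + 2, true ∈ (w (i + l)).1 := by
  induction k with
  | zero =>
    intro i
    simp only [tphiU, TPTL.sat, TPTL.sat_tX, Nat.forall_lt_succ_left (n := 1), Nat.lt_one_iff,
      forall_eq, add_zero]
  | succ k ih =>
    intro i
    simp only [tphiU, TPTL.sat, TPTL.sat_tX, ih, Nat.forall_lt_succ_left (n := k + 2)]
    simp only [add_zero, add_assoc, add_comm 1]

theorem urk_tphiU (k : ℕ) : (tphiU k).urk = k + 1 := by
  induction k with
  | zero => rfl
  | succ k ih => simp [tphiU, tX, tff, TPTL.urk, ih]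

def blockWord (m : ℕ) : DataWord Bool := fun i => (if i < m then Set.univ else ∅, 0)

theorem mem_blockWord {m i : ℕ} {p : Bool} : p ∈ (blockWord m i).1 ↔ i < m := by
  unfold blockWord; split_ifs <;> simp [*]

theorem sat_tphiU_blockWord {m i : ℕ} {ν : ℕ → ℕ} (k : ℕ) :
    TPTL.sat (blockWord m) i ν (tphiU k) ↔ i + k + 1 < m := by
  simp only [sat_tphiU_iff, mem_blockWord]
  exact ⟨fun h => by simpa [add_assoc] using h (k + 1) (by omega), fun h l hl => by omega⟩

theorem exists_until_response {r m n i i' j : ℕ}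
    (h : min (m - i) (r + 2) = min (n - i') (r + 2)) (hij : i < j) :
    ∃ j', i' < j' ∧ min (m - j) (r + 1) = min (n - j') (r + 1) ∧
      ∀ k', i' < k' → k' < j' →
        ∃ k, i < k ∧ k < j ∧ min (m - k) (r + 1) = min (n - k') (r + 1) := by
  by_cases hnear : m - i ≤ r + 1
  · exact ⟨i' + (j - i), by omega, by omega,
      fun k' _ _ => ⟨i + (k' - i'), by omega, by omega, by omega⟩⟩
  by_cases hjfar : r + 1 ≤ m - j
  · exact ⟨i' + 1, by omega, by omega, fun k' _ _ => by omega⟩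
  -- `j` is near the end of the block: answer at the same distance from the end of the other one.
  refine ⟨n - (m - j), by omega, by omega, fun k' _ _ => ?_⟩
  by_cases hk' : n - k' ≤ r
  · exact ⟨m - (n - k'), by omega, by omega, by omega⟩
  · exact ⟨i + 1, by omega, by omega, by omega⟩

theorem sat_blockWord_iff_of_min_eq (ψ : TPTL Bool ℕ) :
    ∀ {r m n i i' : ℕ} {ν : ℕ → ℕ}, ψ.urk ≤ r → min (m - i) (r + 1) = min (n - i') (r + 1) →
      (TPTL.sat (blockWord m) i ν ψ ↔ TPTL.sat (blockWord n) i' ν ψ) := by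
  induction ψ with
  | atom p =>
    intro r m n i i' ν _ h
    simp only [TPTL.sat, mem_blockWord]
    omega
  | cstr => exact fun _ _ => Iff.rfl
  | neg φ ih => exact fun hr h => not_congr (ih hr h)
  | and φ ψ ihφ ihψ =>
    intro r m n i i' ν hr h
    simp only [TPTL.urk, max_le_iff] at hr
    exact and_congr (ihφ hr.1 h) (ihψ hr.2 h)
  | untl φ ψ ihφ ihψ =>
    intro r m n i i' ν hr h
    obtain ⟨s, rfl⟩ : ∃ s, r = s + 1 := ⟨r - 1, by simp only [TPTL.urk] at hr; omega⟩
    simp only [TPTL.urk, add_le_add_iff_right, max_le_iff] at hr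
    refine ⟨TPTL.sat_untl_of_forall_exists (fun _ _ hj => (ihφ hr.1 hj).1)
      (fun _ _ hj => (ihψ hr.2 hj).1) fun _ => exists_until_response h,
      TPTL.sat_untl_of_forall_exists (fun _ _ hj => (ihφ hr.1 hj.symm).2)
      (fun _ _ hj => (ihψ hr.2 hj.symm).2) fun _ => exists_until_response h.symm⟩
  | freeze x φ ih => exact fun hr h => ih hr h

/-- The until hierarchy of TPTL is strict: `φ[k+1]` is expressible with until
rank `k+1` but is not equivalent to any TPTL formula of until rank at most
`k`. -/
theorem tptl_until_hierarchy (k : ℕ) :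
    TPTL.urk (tphiU k) = k + 1 ∧
    ¬ ∃ ψ : TPTL Bool ℕ, TPTL.urk ψ ≤ k ∧
        ∀ w : DataWord Bool, TPTL.models w ψ ↔ TPTL.models w (tphiU k) := by
  refine ⟨urk_tphiU k, fun ⟨ψ, hψ, hequiv⟩ => ?_⟩
  have hlong : TPTL.models (blockWord (k + 2)) ψ :=
    (hequiv _).2 ((sat_tphiU_blockWord k).2 (by omega))
  have hshort : TPTL.models (blockWord (k + 1)) ψ :=
    (sat_blockWord_iff_of_min_eq ψ hψ (by omega)).1 hlong
  exact absurd ((sat_tphiU_blockWord k).1 ((hequiv _).1 hshort)) (by omega)
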